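/- For fixed symmetric matrix A ∈ Sym(d) and rotation-invariant constraint set C = {Q ∈ Sym(d) : F(Q) = 0} where F depends only on the eigenvalues of Q, the minimization min_{Q ∈ C} |A − Q|² (Frobenius norm) admits a minimizer Q* that is simultaneously diagonalizable with A, i.e., Q* = U diag(μ) Uᵀ where A = U diag(λ) Uᵀ, and the problem reduces to min over eigenvalue vectors μ with F(diag(μ)) = 0 of Σᵢ (λᵢ − μᵢ)², provided C is nonempty and closed. -/

import Mathlib

open Matrix
/-- Squared Frobenius norm. -/
noncomputable def frobSq {d : ℕ} (M : Matrix (Fin d) (Fin d) ℝ) : ℝ :=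
  ∑ i, ∑ j, (M i j) ^ 2

/-!
Write a competitor as `Q = V diag(ν) Vᵀ` and put `W = Uᵀ V`. Orthogonal invariance of the
Frobenius norm gives `‖A - Q‖² = ‖diag(λ) W - W diag(ν)‖² = ∑ᵢⱼ (λᵢ - νⱼ)² Wᵢⱼ²`. The squares
`Wᵢⱼ²` form a doubly stochastic matrix, so by Birkhoff's theorem this linear expression is at
least `∑ᵢ (λᵢ - ν_{σ i})²` for some permutation `σ`. Rotation invariance of `F` puts both `ν`
and `ν ∘ σ` in the closed set `D = {ν | F (diag ν) = 0}`, so a point `μ ∈ D` nearest to `λ`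
gives the minimizer `U diag(μ) Uᵀ`.
-/

lemma isSymm_mul_mul_transpose {n R : Type*} [Fintype n] [CommSemiring R] {A : Matrix n n R}
    (hA : A.IsSymm) (B : Matrix n n R) : (B * A * Bᵀ).IsSymm := by
  rw [IsSymm, transpose_mul, transpose_mul, transpose_transpose, hA.eq, Matrix.mul_assoc]

section

variable {n : Type*} [Fintype n] [DecidableEq n]

lemma permMatrix_mul_diagonal_mul_transpose {R : Type*} [CommSemiring R]
    (σ : Equiv.Perm n) (ν : n → R) :
    σ.permMatrix R * diagonal ν * (σ.permMatrix R)ᵀ = diagonal (ν ∘ σ) := by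
  rw [transpose_permMatrix, PEquiv.toMatrix_toPEquiv_mul, Equiv.Perm.permMatrix,
    PEquiv.mul_toMatrix_toPEquiv]
  exact submatrix_diagonal_equiv ν σ

lemma permMatrix_mul_transpose_self {R : Type*} [CommSemiring R] (σ : Equiv.Perm n) :
    σ.permMatrix R * (σ.permMatrix R)ᵀ = 1 := by
  simpa using permMatrix_mul_diagonal_mul_transpose σ (1 : n → R)

lemma Matrix.IsSymm.exists_orthogonal_diagonal {Q : Matrix n n ℝ} (hQ : Q.IsSymm) :
    ∃ (V : Matrix n n ℝ) (ν : n → ℝ), V * Vᵀ = 1 ∧ Q = V * diagonal ν * Vᵀ := by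
  have hH : Q.IsHermitian := by rwa [IsHermitian, conjTranspose_eq_transpose_of_trivial]
  refine ⟨hH.eigenvectorUnitary, hH.eigenvalues, ?_, ?_⟩
  · simpa [star_eq_conjTranspose] using mem_unitaryGroup_iff.mp hH.eigenvectorUnitary.2
  · simpa [star_eq_conjTranspose, Function.comp_def] using hH.spectral_theorem

lemma sq_entries_mem_doublyStochastic {W : Matrix n n ℝ} (hW : W * Wᵀ = 1) :
    of (fun i j => W i j ^ 2) ∈ doublyStochastic ℝ n := by
  have hW' : Wᵀ * W = 1 := mul_eq_one_comm.mp hW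
  refine mem_doublyStochastic_iff_sum.mpr ⟨fun i j => sq_nonneg _, fun i => ?_, fun j => ?_⟩
  · simpa [mul_apply, sq] using congr_fun₂ hW i i
  · simpa [mul_apply, sq] using congr_fun₂ hW' j j

lemma exists_perm_sum_le_of_mem_doublyStochastic (c : n → n → ℝ) {S : Matrix n n ℝ}
    (hS : S ∈ doublyStochastic ℝ n) :
    ∃ σ : Equiv.Perm n, ∑ i, c i (σ i) ≤ ∑ i, ∑ j, c i j * S i j := by
  let f : Matrix n n ℝ →ₗ[ℝ] ℝ := ∑ i, ∑ j, c i j • entryLinearMap ℝ ℝ i j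
  rw [← SetLike.mem_coe, doublyStochastic_eq_convexHull_permMatrix] at hS
  obtain ⟨_, ⟨σ, rfl⟩, hσ⟩ :=
    (f.concaveOn convex_univ).exists_le_of_mem_convexHull (Set.subset_univ _) hS
  refine ⟨σ, le_of_eq_of_le ?_ (hσ.trans_eq ?_)⟩
  · simp [f, PEquiv.toMatrix_apply, Equiv.toPEquiv_apply]
  · simp [f]

end

lemma exists_forall_sum_sq_sub_le {n : Type*} [Fintype n] {D : Set (n → ℝ)} (hD : IsClosed D)
    (hne : D.Nonempty) (lam : n → ℝ) :
    ∃ μ ∈ D, ∀ ν ∈ D, ∑ i, (lam i - μ i) ^ 2 ≤ ∑ i, (lam i - ν i) ^ 2 := by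
  let E : Set (EuclideanSpace ℝ n) := WithLp.ofLp ⁻¹' D
  have hE : IsClosed E := hD.preimage (PiLp.continuous_ofLp 2 _)
  obtain ⟨ν₀, hν₀⟩ := hne
  obtain ⟨μ, hμ, hdist⟩ :=
    hE.exists_infDist_eq_dist ⟨WithLp.toLp 2 ν₀, hν₀⟩ (WithLp.toLp 2 lam)
  have hsq (x : EuclideanSpace ℝ n) :
      dist (WithLp.toLp 2 lam) x ^ 2 = ∑ i, (lam i - x i) ^ 2 := by
    rw [EuclideanSpace.dist_eq, Real.sq_sqrt (by positivity)]
    simp [Real.dist_eq, sq_abs]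
  refine ⟨μ.ofLp, hμ, fun ν hν => ?_⟩
  have h := Metric.infDist_le_dist_of_mem (x := WithLp.toLp 2 lam)
    (show WithLp.toLp 2 ν ∈ E from hν)
  rw [hdist] at h
  simpa [← hsq] using pow_le_pow_left₀ dist_nonneg h 2

section Frobenius

variable {d : ℕ}

lemma frobSq_eq_trace_mul_transpose (M : Matrix (Fin d) (Fin d) ℝ) :
    frobSq M = trace (M * Mᵀ) := by
  simp [frobSq, trace, mul_apply, sq]

lemma frobSq_transpose (M : Matrix (Fin d) (Fin d) ℝ) : frobSq Mᵀ = frobSq M :=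
  Finset.sum_comm

lemma frobSq_diagonal (v : Fin d → ℝ) : frobSq (diagonal v) = ∑ i, v i ^ 2 := by
  simp [frobSq, diagonal_apply, ite_pow]

lemma frobSq_mul_orthogonal (M : Matrix (Fin d) (Fin d) ℝ) {W : Matrix (Fin d) (Fin d) ℝ}
    (hW : W * Wᵀ = 1) : frobSq (M * W) = frobSq M := by
  rw [frobSq_eq_trace_mul_transpose, frobSq_eq_trace_mul_transpose, transpose_mul,
    Matrix.mul_assoc, ← Matrix.mul_assoc W, hW, Matrix.one_mul]

lemma frobSq_orthogonal_mul (M : Matrix (Fin d) (Fin d) ℝ) {W : Matrix (Fin d) (Fin d) ℝ}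
    (hW : Wᵀ * W = 1) : frobSq (W * M) = frobSq M := by
  rw [← frobSq_transpose, transpose_mul, frobSq_mul_orthogonal _ hW, frobSq_transpose]

lemma frobSq_orthogonal_conj (M : Matrix (Fin d) (Fin d) ℝ) {U : Matrix (Fin d) (Fin d) ℝ}
    (hU : U * Uᵀ = 1) : frobSq (U * M * Uᵀ) = frobSq M := by
  have hUt : Uᵀ * Uᵀᵀ = 1 := by rw [transpose_transpose, mul_eq_one_comm, hU]
  rw [frobSq_mul_orthogonal _ hUt, frobSq_orthogonal_mul _ (mul_eq_one_comm.mp hU)]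

lemma frobSq_diagonal_sub_orthogonal_conj (lam ν : Fin d → ℝ) {W : Matrix (Fin d) (Fin d) ℝ}
    (hW : W * Wᵀ = 1) :
    frobSq (diagonal lam - W * diagonal ν * Wᵀ) = ∑ i, ∑ j, (lam i - ν j) ^ 2 * W i j ^ 2 := by
  have hW' : Wᵀ * W = 1 := mul_eq_one_comm.mp hW
  rw [← frobSq_mul_orthogonal _ hW, Matrix.sub_mul, Matrix.mul_assoc _ Wᵀ, hW', Matrix.mul_one]
  simp only [frobSq, Matrix.sub_apply, diagonal_mul, mul_diagonal]
  exact Finset.sum_congr rfl fun i _ => Finset.sum_congr rfl fun j _ => by ring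

/-- The Hoffman–Wielandt inequality. -/
lemma exists_perm_sum_sq_le_frobSq_sub (lam ν : Fin d → ℝ) {U V : Matrix (Fin d) (Fin d) ℝ}
    (hU : U * Uᵀ = 1) (hV : V * Vᵀ = 1) :
    ∃ σ : Equiv.Perm (Fin d), ∑ i, (lam i - ν (σ i)) ^ 2 ≤
      frobSq (U * diagonal lam * Uᵀ - V * diagonal ν * Vᵀ) := by
  set W := Uᵀ * V
  have hW : W * Wᵀ = 1 := by
    rw [transpose_mul, transpose_transpose, Matrix.mul_assoc, ← Matrix.mul_assoc V, hV,
      Matrix.one_mul, mul_eq_one_comm.mp hU]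
  have hconj : U * diagonal lam * Uᵀ - V * diagonal ν * Vᵀ =
      U * (diagonal lam - W * diagonal ν * Wᵀ) * Uᵀ := by
    simp only [W, Matrix.mul_sub, Matrix.sub_mul, transpose_mul, transpose_transpose,
      ← Matrix.mul_assoc, hU, Matrix.one_mul]
    simp only [Matrix.mul_assoc, hU, Matrix.mul_one]
  rw [hconj, frobSq_orthogonal_conj _ hU,
    frobSq_diagonal_sub_orthogonal_conj _ _ hW]
  simpa using exists_perm_sum_le_of_mem_doublyStochastic (fun i j => (lam i - ν j) ^ 2)
    (sq_entries_mem_doublyStochastic hW)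

end Frobenius

lemma apply_diagonal_comp_perm {n : Type*} [Fintype n] [DecidableEq n] {F : Matrix n n ℝ → ℝ}
    (hF : ∀ R : Matrix n n ℝ, R * Rᵀ = 1 → ∀ Q : Matrix n n ℝ, F (R * Q * Rᵀ) = F Q)
    (ν : n → ℝ) (σ : Equiv.Perm n) : F (diagonal (ν ∘ σ)) = F (diagonal ν) := by
  rw [← permMatrix_mul_diagonal_mul_transpose]
  exact hF _ (permMatrix_mul_transpose_self σ) _

theorem rotation_invariant_projection_general {d : ℕ}
    (F : Matrix (Fin d) (Fin d) ℝ → ℝ)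
    (hFrot : ∀ R : Matrix (Fin d) (Fin d) ℝ, R * Rᵀ = 1 →
      ∀ Q : Matrix (Fin d) (Fin d) ℝ, F (R * Q * Rᵀ) = F Q)
    (A U : Matrix (Fin d) (Fin d) ℝ)
    (lam : Fin d → ℝ) (hU : U * Uᵀ = 1)
    (hdiag : A = U * Matrix.diagonal lam * Uᵀ)
    (hCne : ∃ Q : Matrix (Fin d) (Fin d) ℝ, Q.IsSymm ∧ F Q = 0)
    (hCcl : IsClosed {Q : Matrix (Fin d) (Fin d) ℝ | Q.IsSymm ∧ F Q = 0}) :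
    ∃ μ : Fin d → ℝ,
      F (Matrix.diagonal μ) = 0 ∧
      (U * Matrix.diagonal μ * Uᵀ).IsSymm ∧
      F (U * Matrix.diagonal μ * Uᵀ) = 0 ∧
      (∀ Q : Matrix (Fin d) (Fin d) ℝ, Q.IsSymm → F Q = 0 →
        frobSq (A - U * Matrix.diagonal μ * Uᵀ) ≤ frobSq (A - Q)) ∧
      frobSq (A - U * Matrix.diagonal μ * Uᵀ) = ∑ i, (lam i - μ i) ^ 2 ∧
      (∀ ν : Fin d → ℝ, F (Matrix.diagonal ν) = 0 →
        ∑ i, (lam i - μ i) ^ 2 ≤ ∑ i, (lam i - ν i) ^ 2) := by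
  set D := {ν : Fin d → ℝ | F (diagonal ν) = 0}
  have hDcl : IsClosed D := by
    simpa [D, isSymm_diagonal] using hCcl.preimage continuous_id.matrix_diagonal
  obtain ⟨Q₀, hQ₀, hFQ₀⟩ := hCne
  obtain ⟨V₀, ν₀, hV₀, rfl⟩ := hQ₀.exists_orthogonal_diagonal
  obtain ⟨μ, hμ, hmin⟩ :=
    exists_forall_sum_sq_sub_le hDcl ⟨ν₀, (hFrot V₀ hV₀ _).symm.trans hFQ₀⟩ lam
  have hval : frobSq (A - U * diagonal μ * Uᵀ) = ∑ i, (lam i - μ i) ^ 2 := by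
    rw [hdiag, ← Matrix.sub_mul, ← Matrix.mul_sub, diagonal_sub, frobSq_orthogonal_conj _ hU,
      frobSq_diagonal]
  refine ⟨μ, hμ, isSymm_mul_mul_transpose (isSymm_diagonal μ) U, (hFrot U hU _).trans hμ,
    fun Q hQ hFQ => ?_, hval, hmin⟩
  obtain ⟨V, ν, hV, rfl⟩ := hQ.exists_orthogonal_diagonal
  obtain ⟨σ, hσ⟩ := exists_perm_sum_sq_le_frobSq_sub lam ν hU hV
  have hνσ : ν ∘ σ ∈ D := by
    simpa [D, apply_diagonal_comp_perm hFrot] using (hFrot V hV _).symm.trans hFQ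
  rw [hval, hdiag]
  exact (hmin _ hνσ).trans hσ

/-- for a symmetric `A = U diag(λ) Uᵀ` and a rotation-invariant,
nonempty, closed constraint set `C = {Q symmetric : F Q = 0}`, the Frobenius
projection of `A` onto `C` admits a minimizer `Q⋆ = U diag(μ) Uᵀ` simultaneously
diagonalizable with `A`, and the problem reduces to minimizing `Σᵢ (λᵢ − μᵢ)²`
over eigenvalue vectors `μ` with `F(diag μ) = 0`. -/
theorem rotation_invariant_projection {d : ℕ}
    (F : Matrix (Fin d) (Fin d) ℝ → ℝ)
    (hFrot : ∀ R : Matrix (Fin d) (Fin d) ℝ, R * Rᵀ = 1 →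
      ∀ Q : Matrix (Fin d) (Fin d) ℝ, F (R * Q * Rᵀ) = F Q)
    (A U : Matrix (Fin d) (Fin d) ℝ) (hA : A.IsSymm)
    (lam : Fin d → ℝ) (hU : U * Uᵀ = 1)
    (hdiag : A = U * Matrix.diagonal lam * Uᵀ)
    (hCne : ∃ Q : Matrix (Fin d) (Fin d) ℝ, Q.IsSymm ∧ F Q = 0)
    (hCcl : IsClosed {Q : Matrix (Fin d) (Fin d) ℝ | Q.IsSymm ∧ F Q = 0}) :
    ∃ μ : Fin d → ℝ,
      F (Matrix.diagonal μ) = 0 ∧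
      (U * Matrix.diagonal μ * Uᵀ).IsSymm ∧
      F (U * Matrix.diagonal μ * Uᵀ) = 0 ∧
      (∀ Q : Matrix (Fin d) (Fin d) ℝ, Q.IsSymm → F Q = 0 →
        frobSq (A - U * Matrix.diagonal μ * Uᵀ) ≤ frobSq (A - Q)) ∧
      frobSq (A - U * Matrix.diagonal μ * Uᵀ) = ∑ i, (lam i - μ i) ^ 2 ∧
      (∀ ν : Fin d → ℝ, F (Matrix.diagonal ν) = 0 →
        ∑ i, (lam i - μ i) ^ 2 ≤ ∑ i, (lam i - ν i) ^ 2) :=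
  rotation_invariant_projection_general F hFrot A U lam hU hdiag hCne hCcl
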